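/- arXiv:2307.12770 — 2 statements merged into one kernel-verified Lean document; each statement's English description precedes it below -/
import Mathlib

section
/- Let T=(V,E) be a tree with n vertices, and let T̄=(V̄,Ē) be a subtree of T with q = |V̄| vertices. For every valid initial configuration A with at least q holes (q ≤ |H|), there exists a plan f with |f| ≤ n·q such that V̄ ∩ ρ(A,f)(P) = ∅, i.e., after applying f every vertex of the subtree T̄ is unoccupied by pebbles (the gather holes problem is solvable with O(nq) moves). -/
namespace PMT

variable {V P H : Type}

/-- A configuration assigns to each pebble or hole a vertex, bijectively. -/
abbrev Config (P H V : Type) : Type := (P ⊕ H) ≃ V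

/- Apply a single move `u → v`: applicable iff `(u,v)` is an edge and the occupant of `v`
is a hole; applying it swaps the occupants of `u` and `v`. -/
open Classical in
noncomputable def applyMove (G : SimpleGraph V) (A : Config P H V) (m : V × V) :
    Option (Config P H V) :=
  if G.Adj m.1 m.2 ∧ (A.symm m.2).isRight = true then
    some (A.trans (Equiv.swap m.1 m.2))
  else
    none

/-- Apply a plan (finite list of moves) in order; defined (`some`) only when each
successive move is applicable. -/
noncomputable def applyPlan (G : SimpleGraph V) :
    Config P H V → List (V × V) → Option (Config P H V)
  | A, [] => some A
  | A, m :: f => (applyMove G A m).bind fun B => applyPlan G B f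

end PMT

/-!
Take a path from a pebble at `v` to a hole at `h`. Shifting its pebbles one step towards `h`
(recursively: if the vertex after `v` holds a pebble, first clear it along the rest of the path,
otherwise move into it first and continue from there) uses as many moves as the path has edges
and exchanges the contents of `v` and `h`, leaving every other vertex as it was. Taking `v` a
pebble in `S` and `h` a hole outside `S`, which exists because `S` has at most `|H|` vertices,
removes one pebble from `S` with fewer than `n` moves, so `|S|` rounds suffice.
-/

namespace PMT

open Finset

variable {V P H : Type}

def holeAt (A : Config P H V) (v : V) : Bool := (A.symm v).isRight

theorem holeAt_trans_swap [DecidableEq V] (A : Config P H V) (u x : V) :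
    holeAt (A.trans (Equiv.swap u x)) = holeAt A ∘ Equiv.swap u x := by
  funext y
  simp [holeAt, Equiv.symm_swap]

theorem comp_swap_comp_swap {α β : Type*} [DecidableEq α] {f : α → β} {a b : α} (c : α)
    (hab : f a = f b) : f ∘ Equiv.swap b c ∘ Equiv.swap a b = f ∘ Equiv.swap a c := by
  funext y
  simp only [Function.comp_apply, Equiv.swap_apply_def]
  split_ifs <;> simp_all

theorem applyPlan_append (G : SimpleGraph V) (A : Config P H V) (f g : List (V × V)) :
    applyPlan G A (f ++ g) = (applyPlan G A f).bind (applyPlan G · g) := by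
  induction f generalizing A with
  | nil => rfl
  | cons m f ih =>
    simp only [List.cons_append, applyPlan]
    cases applyMove G A m <;> simp [ih]

def ReachableIn (G : SimpleGraph V) (k : ℕ) (A B : Config P H V) : Prop :=
  ∃ f, applyPlan G A f = some B ∧ f.length ≤ k

namespace ReachableIn

variable {G : SimpleGraph V} {A B C : Config P H V} {k l : ℕ}

theorem refl (G : SimpleGraph V) (A : Config P H V) : ReachableIn G 0 A A :=
  ⟨[], rfl, le_rfl⟩

theorem mono (h : ReachableIn G k A B) (hkl : k ≤ l) : ReachableIn G l A B :=
  let ⟨f, hf, hlen⟩ := h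
  ⟨f, hf, hlen.trans hkl⟩

theorem move [DecidableEq V] {u x : V} (hadj : G.Adj u x) (hx : holeAt A x = true) :
    ReachableIn G 1 A (A.trans (Equiv.swap u x)) := by
  refine ⟨[(u, x)], ?_, le_rfl⟩
  have happly : G.Adj u x ∧ (A.symm x).isRight = true := ⟨hadj, hx⟩
  simp only [applyPlan, applyMove, if_pos happly, Option.bind_some]
  -- `applyMove` builds the swap with the classical `DecidableEq V` instance
  congr
  exact Subsingleton.elim _ _

theorem trans (hAB : ReachableIn G k A B) (hBC : ReachableIn G l B C) :
    ReachableIn G (k + l) A C := by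
  obtain ⟨f, hf, hflen⟩ := hAB
  obtain ⟨g, hg, hglen⟩ := hBC
  refine ⟨f ++ g, ?_, ?_⟩
  · simp [applyPlan_append, hf, hg]
  · rw [List.length_append]
    exact Nat.add_le_add hflen hglen

end ReachableIn

theorem exists_reachableIn_holeAt_swap_of_isPath [DecidableEq V] {G : SimpleGraph V} {v h : V}
    {p : G.Walk v h} (hp : p.IsPath) (A : Config P H V) (hv : holeAt A v = false)
    (hh : holeAt A h = true) :
    ∃ B, ReachableIn G p.length A B ∧ holeAt B = holeAt A ∘ Equiv.swap v h := by
  induction p generalizing A with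
  | nil => cases hv.symm.trans hh
  | @cons u x h hadj q ih =>
    obtain ⟨hq, hu⟩ := (SimpleGraph.Walk.cons_isPath_iff hadj q).mp hp
    have huh : u ≠ h := fun e => hu (e ▸ q.end_mem_support)
    rw [SimpleGraph.Walk.length_cons]
    cases hx : holeAt A x
    · obtain ⟨B, hAB, hB⟩ := ih hq A hx hh
      have hBx : holeAt B x = true := by simp [hB, hh]
      refine ⟨_, hAB.trans (ReachableIn.move hadj hBx), ?_⟩
      rw [holeAt_trans_swap, hB, Function.comp_assoc, comp_swap_comp_swap h (hv.trans hx.symm)]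
    · by_cases hxh : x = h
      · subst hxh
        obtain rfl := SimpleGraph.Walk.eq_nil_iff_nil.mpr (SimpleGraph.Walk.isPath_iff_nil.mp hq)
        exact ⟨_, ReachableIn.move hadj hx, holeAt_trans_swap A u x⟩
      · have hA'x : holeAt (A.trans (Equiv.swap u x)) x = false := by
          simp [holeAt_trans_swap, hv]
        have hA'h : holeAt (A.trans (Equiv.swap u x)) h = true := by
          simp [holeAt_trans_swap, Equiv.swap_apply_of_ne_of_ne (Ne.symm huh) (Ne.symm hxh), hh]
        obtain ⟨B, hA'B, hB⟩ := ih hq _ hA'x hA'h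
        have hlen : 1 + q.length ≤ q.length + 1 := by omega
        refine ⟨B, ((ReachableIn.move hadj hx).trans hA'B).mono hlen, ?_⟩
        rw [hB, holeAt_trans_swap, Function.comp_assoc, Equiv.swap_comm u x, Equiv.swap_comm x h,
          comp_swap_comp_swap u (hh.trans hx.symm), Equiv.swap_comm]

theorem filter_holeAt_swap_eq_erase [DecidableEq V] (A : Config P H V) (S : Finset V) {v h : V}
    (hhS : h ∉ S) (hh : holeAt A h = true) :
    {y ∈ S | (holeAt A ∘ Equiv.swap v h) y = false} =
      {y ∈ S | holeAt A y = false}.erase v := by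
  ext y
  by_cases hyv : y = v
  · simp [hyv, hh]
  · by_cases hyS : y ∈ S
    · have hyh : y ≠ h := by rintro rfl; exact hhS hyS
      simp [hyv, hyS, Equiv.swap_apply_of_ne_of_ne hyv hyh]
    · simp [hyS]

theorem card_filter_holeAt [Fintype V] [Fintype H] (A : Config P H V) :
    #{y | holeAt A y = true} = Fintype.card H := by
  have hholes : ({y | holeAt A y = true} : Finset V)
      = univ.map (Function.Embedding.inr.trans A.toEmbedding) := by
    ext y
    rw [mem_filter, mem_map]
    simp only [mem_univ, true_and, Function.Embedding.trans_apply,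
      Function.Embedding.inr_apply, Equiv.coe_toEmbedding]
    constructor
    · intro hy
      obtain ⟨z, hz⟩ := Sum.isRight_iff.mp hy
      exact ⟨z, by rw [← hz, Equiv.apply_symm_apply]⟩
    · rintro ⟨z, rfl⟩
      simp [holeAt]
  rw [hholes, card_map, card_univ]

theorem exists_holeAt_notMem [Fintype V] [Fintype H] (A : Config P H V) {S : Finset V}
    (hS : #S ≤ Fintype.card H) {v : V} (hvS : v ∈ S) (hv : holeAt A v = false) :
    ∃ h ∉ S, holeAt A h = true := by
  classical
  by_contra! hcon
  have hsub : ({y | holeAt A y = true} : Finset V) ⊆ S.erase v := by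
    intro y hy
    rw [mem_filter] at hy
    refine mem_erase.mpr ⟨?_, ?_⟩
    · rintro rfl
      simp_all
    · by_contra hyS
      exact hcon y hyS hy.2
  have := card_le_card hsub
  rw [card_filter_holeAt, card_erase_of_mem hvS] at this
  have := card_pos.mpr ⟨v, hvS⟩
  omega

theorem exists_reachableIn_forall_holeAt [Fintype V] [Fintype H] {G : SimpleGraph V}
    (hG : G.Connected) {S : Finset V} (hS : #S ≤ Fintype.card H) (A : Config P H V) :
    ∃ B, ReachableIn G (Fintype.card V * #{y ∈ S | holeAt A y = false}) A B ∧
      ∀ y ∈ S, holeAt B y = true := by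
  classical
  induction hk : #{y ∈ S | holeAt A y = false} generalizing A with
  | zero =>
    refine ⟨A, (ReachableIn.refl G A).mono (Nat.zero_le _), fun y hy => ?_⟩
    rw [card_eq_zero, filter_eq_empty_iff] at hk
    simpa using hk hy
  | succ k ih =>
    obtain ⟨v, hv⟩ := card_pos.mp (by rw [hk]; exact k.succ_pos)
    rw [mem_filter] at hv
    obtain ⟨h, hhS, hh⟩ := exists_holeAt_notMem A hS hv.1 hv.2
    obtain ⟨p, hp⟩ := (hG.preconnected v h).some.toPath
    obtain ⟨B, hAB, hB⟩ := exists_reachableIn_holeAt_swap_of_isPath hp A hv.2 hh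
    have hBk : #{y ∈ S | holeAt B y = false} = k := by
      rw [hB, filter_holeAt_swap_eq_erase A S hhS hh, card_erase_of_mem (mem_filter.mpr hv), hk,
        Nat.add_sub_cancel]
    obtain ⟨C, hBC, hC⟩ := ih B hBk
    refine ⟨C, (hAB.trans hBC).mono ?_, hC⟩
    have := hp.length_lt
    rw [Nat.mul_succ]
    omega

end PMT

theorem gather_holes_general {V P H : Type} [Fintype V] [Fintype H]
    (G : SimpleGraph V) (hT : G.IsTree)
    (A : PMT.Config P H V) (S : Finset V)
    (hq : S.card ≤ Fintype.card H) :
    ∃ (f : List (V × V)) (B : PMT.Config P H V),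
      PMT.applyPlan G A f = some B ∧
      f.length ≤ Fintype.card V * S.card ∧
      ∀ v ∈ S, (B.symm v).isRight = true := by
  obtain ⟨B, ⟨f, hf, hlen⟩, hB⟩ := PMT.exists_reachableIn_forall_holeAt hT.connected hq A
  exact ⟨f, B, hf, hlen.trans (Nat.mul_le_mul_left _ (Finset.card_filter_le _ _)), hB⟩

/-- the gather-holes problem: for every subtree `S` with `q = |S| ≤ |H|`
vertices there is a plan of at most `n·q` moves after which every vertex of `S` is
unoccupied by pebbles. -/
theorem gather_holes {V P H : Type} [Fintype V] [Fintype P] [Fintype H]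
    (G : SimpleGraph V) (hT : G.IsTree)
    (hcard : Fintype.card V = Fintype.card P + Fintype.card H)
    (A : PMT.Config P H V) (S : Finset V)
    (hconn : (G.induce (S : Set V)).Connected)
    (hq : S.card ≤ Fintype.card H) :
    ∃ (f : List (V × V)) (B : PMT.Config P H V),
      PMT.applyPlan G A f = some B ∧
      f.length ≤ Fintype.card V * S.card ∧
      ∀ v ∈ S, (B.symm v).isRight = true :=
  gather_holes_general G hT A S hq
end

section
/- Let T be a tree with at least 3 vertices and let v be a leaf of T whose unique neighbor has degree strictly greater than 3. Then c(Tᵛ) = c(T), where Tᵛ is the tree obtained from T by removing v. -/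
namespace PMT

variable {V : Type}

/-- The degree of a vertex (number of neighbors). -/
noncomputable def deg (G : SimpleGraph V) (v : V) : ℕ := (G.neighborSet v).ncard

/-- A corridor: a (nontrivial) path whose endpoints have degree different from 2 and
whose internal vertices all have degree exactly 2. -/
def IsCorridor (G : SimpleGraph V) {a b : V} (p : G.Walk a b) : Prop :=
  p.IsPath ∧ 1 ≤ p.length ∧ deg G a ≠ 2 ∧ deg G b ≠ 2 ∧
    ∀ x ∈ p.support, x ≠ a → x ≠ b → deg G x = 2

/-- `c₁(T)`: the maximum length of a corridor. -/
noncomputable def c1 (G : SimpleGraph V) : ℕ :=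
  sSup {n | ∃ (a b : V) (p : G.Walk a b), IsCorridor G p ∧ p.length = n}

/-- `c₂(T)`: the maximum length of a corridor both of whose endpoints are junctions
(vertices of degree greater than 2); `0` if no such corridor exists. -/
noncomputable def c2 (G : SimpleGraph V) : ℕ :=
  sSup {n | ∃ (a b : V) (p : G.Walk a b),
    IsCorridor G p ∧ 2 < deg G a ∧ 2 < deg G b ∧ p.length = n}

/-- A path graph: all vertices lie on a single path. -/
def IsPathGraph (G : SimpleGraph V) : Prop :=
  ∃ (a b : V) (p : G.Walk a b), p.IsPath ∧ ∀ x : V, x ∈ p.support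

/- The constant `c(T)`: `c₁(T)` if `T` is a path graph,
`max (c₁(T)+1) (c₂(T)+2)` otherwise. -/
open Classical in
noncomputable def cT (G : SimpleGraph V) : ℕ :=
  if IsPathGraph G then c1 G else max (c1 G + 1) (c2 G + 2)

variable {V : Type}

open SimpleGraph Walk

/-- at the first endpoint of a path, there is at most one incident edge -/
lemma uniq_edge_fst {G : SimpleGraph V} : ∀ {a b : V} {p : G.Walk a b}, p.IsPath →
    ∀ {y z : V}, s(a,y) ∈ p.edges → s(a,z) ∈ p.edges → y = z := by
  intro a b p
  induction p with
  | nil => intro _ y z hy; simp at hy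
  | @cons a c b h q ih =>
    intro hp y z hy hz
    rw [Walk.cons_isPath_iff] at hp
    have key : ∀ t : V, s(a,t) ∈ (Walk.cons h q).edges → t = c := by
      intro t ht
      rw [Walk.edges_cons, List.mem_cons] at ht
      rcases ht with ht | ht
      · rcases Sym2.eq_iff.mp ht with ⟨_, rfl⟩ | ⟨rfl, rfl⟩
        · rfl
        · exact absurd rfl h.ne
      · exact absurd (q.fst_mem_support_of_mem_edges ht) hp.2
    rw [key y hy, key z hz]

lemma uniq_edge_snd {G : SimpleGraph V} {a b : V} {p : G.Walk a b} (hp : p.IsPath)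
    {y z : V} (hy : s(b,y) ∈ p.edges) (hz : s(b,z) ∈ p.edges) : y = z := by
  have h1 : s(b,y) ∈ p.reverse.edges := by rw [Walk.edges_reverse, List.mem_reverse]; exact hy
  have h2 : s(b,z) ∈ p.reverse.edges := by rw [Walk.edges_reverse, List.mem_reverse]; exact hz
  exact uniq_edge_fst hp.reverse h1 h2

/-- no vertex of a path has three distinct incident edges -/
lemma no_three_edges {G : SimpleGraph V} {a b : V} {p : G.Walk a b} (hp : p.IsPath)
    {x y₁ y₂ y₃ : V} (h12 : y₁ ≠ y₂) (h13 : y₁ ≠ y₃) (h23 : y₂ ≠ y₃)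
    (e1 : s(x,y₁) ∈ p.edges) (e2 : s(x,y₂) ∈ p.edges) (e3 : s(x,y₃) ∈ p.edges) : False := by
  classical
  have hx : x ∈ p.support := p.fst_mem_support_of_mem_edges e1
  have hsplit : ∀ t : V, s(x,t) ∈ p.edges →
      s(x,t) ∈ (p.takeUntil x hx).edges ∨ s(x,t) ∈ (p.dropUntil x hx).edges := by
    intro t ht
    rw [← p.take_spec hx, Walk.edges_append, List.mem_append] at ht
    exact ht
  have htake := hp.takeUntil hx
  have hdrop := hp.dropUntil hx
  rcases hsplit _ e1 with m1 | m1 <;> rcases hsplit _ e2 with m2 | m2 <;>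
    rcases hsplit _ e3 with m3 | m3 <;>
  first
    | exact h12 (uniq_edge_snd htake m1 m2)
    | exact h12 (uniq_edge_fst hdrop m1 m2)
    | exact h13 (uniq_edge_snd htake m1 m3)
    | exact h13 (uniq_edge_fst hdrop m1 m3)
    | exact h23 (uniq_edge_snd htake m2 m3)
    | exact h23 (uniq_edge_fst hdrop m2 m3)



/-- In an acyclic graph, an edge between two vertices on a path is an edge of the path. -/
lemma edge_mem_of_mem_support {G : SimpleGraph V} (hac : G.IsAcyclic) {a b x y : V}
    {p : G.Walk a b} (hp : p.IsPath) (hx : x ∈ p.support) (hy : y ∈ p.support)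
    (hadj : G.Adj x y) : s(x,y) ∈ p.edges := by
  classical
  have hxy : x ≠ y := hadj.ne
  have hsup : y ∈ (p.takeUntil x hx).support ∨ y ∈ (p.dropUntil x hx).support := by
    rw [← Walk.mem_support_append_iff, p.take_spec hx]; exact hy
  rcases hsup with hy' | hy'
  · -- y is before x; use the reversed takeUntil
    set r := (p.takeUntil x hx).reverse with hr
    have hyr : y ∈ r.support := by rw [hr, Walk.support_reverse, List.mem_reverse]; exact hy'
    have hrp : r.IsPath := (hp.takeUntil hx).reverse
    have hq : (r.takeUntil y hyr).IsPath := hrp.takeUntil hyr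
    have hone : (Walk.cons hadj Walk.nil : G.Walk x y).IsPath := by
      simp [Walk.cons_isPath_iff, hxy]
    have := hac.path_unique ⟨r.takeUntil y hyr, hq⟩ ⟨Walk.cons hadj Walk.nil, hone⟩
    have hedge : s(x,y) ∈ (r.takeUntil y hyr).edges := by
      rw [Subtype.ext_iff] at this
      simp only at this
      rw [this]; simp
    have h2 : s(x,y) ∈ r.edges := r.edges_takeUntil_subset hyr hedge
    have h3 : s(x,y) ∈ (p.takeUntil x hx).edges := by
      rw [hr, Walk.edges_reverse, List.mem_reverse] at h2; exact h2
    exact p.edges_takeUntil_subset hx h3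
  · set r := p.dropUntil x hx with hr
    have hq : (r.takeUntil y hy').IsPath := (hp.dropUntil hx).takeUntil hy'
    have hone : (Walk.cons hadj Walk.nil : G.Walk x y).IsPath := by
      simp [Walk.cons_isPath_iff, hxy]
    have := hac.path_unique ⟨r.takeUntil y hy', hq⟩ ⟨Walk.cons hadj Walk.nil, hone⟩
    have hedge : s(x,y) ∈ (r.takeUntil y hy').edges := by
      rw [Subtype.ext_iff] at this
      simp only at this
      rw [this]; simp
    exact p.edges_dropUntil_subset hx (r.edges_takeUntil_subset hy' hedge)

/-- An acyclic graph with a vertex of degree > 2 is not a path graph. -/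
lemma not_isPathGraph {G : SimpleGraph V} [Finite V] (hac : G.IsAcyclic) {x : V}
    (hx : 2 < deg G x) : ¬ IsPathGraph G := by
  rintro ⟨a, b, p, hp, hall⟩
  obtain ⟨y₁, y₂, y₃, hy₁, hy₂, hy₃, h12, h13, h23⟩ :=
    (Set.two_lt_ncard_iff (G.neighborSet x).toFinite).mp hx
  have e1 := edge_mem_of_mem_support hac hp (hall x) (hall y₁) hy₁
  have e2 := edge_mem_of_mem_support hac hp (hall x) (hall y₂) hy₂
  have e3 := edge_mem_of_mem_support hac hp (hall x) (hall y₃) hy₃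
  exact no_three_edges hp h12 h13 h23 e1 e2 e3


section Lift
variable {G : SimpleGraph V} {s : Set V}

/-- Lift a walk whose support lies in `s` to the induced subgraph on `s`. -/
def liftW : ∀ {a b : V} (p : G.Walk a b), (∀ x ∈ p.support, x ∈ s) → (ha : a ∈ s) →
    (hb : b ∈ s) → (G.induce s).Walk ⟨a, ha⟩ ⟨b, hb⟩
  | _, _, Walk.nil, _, _, _ => Walk.nil
  | _, _, Walk.cons h q, hsup, ha, hb =>
      Walk.cons (by exact h)
        (liftW q (fun x hx => hsup x (by simp [hx])) (hsup _ (by simp)) hb)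

lemma liftW_map : ∀ {a b : V} (p : G.Walk a b) (hsup : ∀ x ∈ p.support, x ∈ s)
    (ha : a ∈ s) (hb : b ∈ s),
    (liftW p hsup ha hb).map (SimpleGraph.Embedding.induce s).toHom = p
  | _, _, Walk.nil, _, _, _ => rfl
  | _, _, Walk.cons h q, hsup, ha, hb => by
      simp only [liftW, Walk.map_cons]
      congr 1
      exact congrArg (Walk.cons h) (liftW_map q _ _ _)

lemma liftW_length {a b : V} (p : G.Walk a b) (hsup : ∀ x ∈ p.support, x ∈ s)
    (ha : a ∈ s) (hb : b ∈ s) : (liftW p hsup ha hb).length = p.length := by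
  conv_rhs => rw [← liftW_map p hsup ha hb]
  exact (Walk.length_map _ _).symm

lemma liftW_isPath {a b : V} {p : G.Walk a b} (hp : p.IsPath)
    (hsup : ∀ x ∈ p.support, x ∈ s) (ha : a ∈ s) (hb : b ∈ s) :
    (liftW p hsup ha hb).IsPath := by
  have := (Walk.map_isPath_iff_of_injective (f := (SimpleGraph.Embedding.induce (G := G) s).toHom)
    (p := liftW p hsup ha hb) (SimpleGraph.Embedding.induce (G := G) s).injective)
  rw [liftW_map] at this
  exact this.mp hp

lemma liftW_support {a b : V} (p : G.Walk a b) (hsup : ∀ x ∈ p.support, x ∈ s)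
    (ha : a ∈ s) (hb : b ∈ s) {x : V} {hx : x ∈ s} :
    (⟨x, hx⟩ : s) ∈ (liftW p hsup ha hb).support ↔ x ∈ p.support := by
  conv_rhs => rw [← liftW_map p hsup ha hb]
  erw [Walk.support_map]
  constructor
  · intro h
    exact List.mem_map_of_mem h
  · intro h
    rcases List.mem_map.mp h with ⟨y, hy, hyx⟩
    have : y = (⟨x, hx⟩ : s) := Subtype.ext hyx
    rwa [this] at hy

/-- neighbor sets in the induced subgraph -/
lemma deg_induce (x : s) : deg (G.induce s) x = (G.neighborSet ↑x ∩ s).ncard := by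
  have h1 : (G.induce s).neighborSet x = Subtype.val ⁻¹' (G.neighborSet ↑x) := by
    ext y; simp [SimpleGraph.neighborSet]
  have h2 : Subtype.val '' ((G.induce s).neighborSet x) = G.neighborSet ↑x ∩ s := by
    rw [h1, Subtype.image_preimage_coe, Set.inter_comm]
  rw [deg, ← Set.ncard_image_of_injective _ Subtype.val_injective, h2]

end Lift



/-- In a finite acyclic graph, any vertex of degree ≠ 2 with a neighbor
is the endpoint of some corridor. -/
lemma exists_corridor [Fintype V] {G : SimpleGraph V} (hac : G.IsAcyclic) {w u : V}
    (h : G.Adj w u) (hdw : deg G w ≠ 2) : ∃ (a b : V) (p : G.Walk a b), IsCorridor G p := by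
  classical
  set P : Set ℕ := {n | ∃ (u' : V) (p : G.Walk w u'), p.IsPath ∧ 1 ≤ p.length ∧
    (∀ x ∈ p.support, x ≠ w → x ≠ u' → deg G x = 2) ∧ p.length = n} with hP
  have hne : P.Nonempty := by
    refine ⟨1, u, Walk.cons h Walk.nil, ?_, by simp, ?_, by simp⟩
    · simp [Walk.cons_isPath_iff, h.ne]
    · intro x hx hxw hxu
      simp only [Walk.support_cons, Walk.support_nil, List.mem_cons, List.mem_singleton] at hx
      rcases hx with rfl | rfl | hx
      · exact absurd rfl hxw
      · exact absurd rfl hxu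
      · simp at hx
  have hbdd : BddAbove P := by
    refine ⟨Fintype.card V, ?_⟩
    rintro n ⟨u', p, hp, _, _, rfl⟩
    exact le_of_lt hp.length_lt
  obtain ⟨u', p, hp, hlen1, hint, hlen⟩ := Nat.sSup_mem hne hbdd
  by_cases hdu : deg G u' = 2
  · exfalso
    have hwne : w ≠ u' := by
      rintro rfl
      rw [(Walk.isPath_iff_eq_nil (p := p)).mp hp] at hlen1
      simp at hlen1
    cases hrev : p.reverse with
    | nil => exact hwne rfl
    | @cons _ y _ h' q =>
      have hpeq : p = q.reverse.concat h'.symm := by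
        rw [← Walk.reverse_reverse p, hrev, Walk.reverse_cons, Walk.concat_eq_append]
      set q₀ := q.reverse with hq₀
      have hq₀path : q₀.IsPath := by
        have : p.reverse.IsPath := hp.reverse
        rw [hrev, Walk.cons_isPath_iff] at this
        exact this.1.reverse
      have hdu2 : 1 < (G.neighborSet u').ncard := by rw [← deg, hdu]; norm_num
      obtain ⟨x, hx, hxy⟩ := Set.exists_ne_of_one_lt_ncard hdu2 y
      have hxadj : G.Adj u' x := hx
      have hxu' : x ≠ u' := fun e => G.irrefl (e ▸ hxadj)
      have hpsup : p.support = q₀.support.concat u' := by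
        rw [hpeq, Walk.support_concat, List.concat_eq_append]
      have hu'q : u' ∉ q₀.support := by
        have hnd := hp.support_nodup
        rw [hpsup, List.concat_eq_append, List.nodup_append] at hnd
        intro hmem
        exact hnd.2.2 u' hmem u' (List.mem_singleton_self u') rfl
      have hxp : x ∉ p.support := by
        intro hxp
        have hxq : x ∈ q₀.support := by
          rw [hpsup, List.concat_eq_append, List.mem_append, List.mem_singleton] at hxp
          rcases hxp with hxp | rfl
          · exact hxp
          · exact absurd rfl hxu'
        set A : G.Walk x u' := (q₀.dropUntil x hxq).concat h'.symm with hA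
        have hApath : A.IsPath := by
          rw [Walk.isPath_def, hA, Walk.support_concat,
            List.nodup_append]
          refine ⟨(hq₀path.dropUntil hxq).support_nodup, List.nodup_singleton _, ?_⟩
          intro t ht t' ht' e
          rw [List.mem_singleton] at ht'
          subst ht'
          exact hu'q (e ▸ q₀.support_dropUntil_subset hxq ht)
        have hBpath : (Walk.cons hxadj.symm Walk.nil : G.Walk x u').IsPath := by
          simp [Walk.cons_isPath_iff, hxu']
        have heq := hac.path_unique ⟨A, hApath⟩ ⟨Walk.cons hxadj.symm Walk.nil, hBpath⟩
        rw [Subtype.ext_iff] at heq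
        simp only at heq
        have hlenA : A.length = 1 := by rw [heq]; simp
        rw [hA, Walk.length_concat] at hlenA
        have : (q₀.dropUntil x hxq).length = 0 := by omega
        exact hxy (Walk.eq_of_length_eq_zero this)
      set p₁ := p.concat hxadj with hp₁def
      have hp₁ : p₁.IsPath := by
        rw [Walk.isPath_def, hp₁def, Walk.support_concat,
          List.nodup_append]
        exact ⟨hp.support_nodup, List.nodup_singleton _, fun t ht t' ht' e => by
          rw [List.mem_singleton] at ht'; subst ht'; exact hxp (e ▸ ht)⟩
      have hmem : p₁.length ∈ P := by
        refine ⟨x, p₁, hp₁, ?_, ?_, rfl⟩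
        · rw [hp₁def, Walk.length_concat]; omega
        · intro z hz hzw hzx
          rw [hp₁def, Walk.support_concat, List.mem_append,
            List.mem_singleton] at hz
          rcases hz with hz | rfl
          · by_cases hzu : z = u'
            · exact hzu ▸ hdu
            · exact hint z hz hzw hzu
          · exact absurd rfl hzx
      have hle := le_csSup hbdd hmem
      rw [hp₁def, Walk.length_concat, hlen] at hle
      omega
  · exact ⟨w, u', p, hp, hlen1, hdw, hdu, hint⟩


section Transfer

variable {G : SimpleGraph V} {v w : V}

lemma IsCorridor.reverse {a b : V} {p : G.Walk a b} (hc : IsCorridor G p) :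
    IsCorridor G p.reverse := by
  obtain ⟨hp, hl, ha, hb, hint⟩ := hc
  refine ⟨hp.reverse, by rwa [Walk.length_reverse], hb, ha, ?_⟩
  intro x hx hxb hxa
  rw [Walk.support_reverse, List.mem_reverse] at hx
  exact hint x hx hxa hxb

lemma neighborSet_of_leaf [Finite V] (hleaf : deg G v = 1) (hadj : G.Adj v w) :
    G.neighborSet v = {w} := by
  obtain ⟨a, ha⟩ := Set.ncard_eq_one.mp hleaf
  have : w ∈ ({a} : Set V) := ha ▸ hadj
  rw [Set.mem_singleton_iff] at this
  rw [ha, this]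

variable (hnv : G.neighborSet v = {w})

lemma adj_v_eq (hnv : G.neighborSet v = {w}) {x : V} (h : G.Adj v x) : x = w := by
  have : x ∈ G.neighborSet v := h
  rw [hnv, Set.mem_singleton_iff] at this
  exact this

lemma deg_induce_ne [Finite V] (hnv : G.neighborSet v = {w}) {x : V} (hx : x ≠ v) (hxw : x ≠ w) :
    deg (G.induce {y : V | y ≠ v}) ⟨x, hx⟩ = deg G x := by
  rw [deg_induce, deg]
  congr 1
  rw [Set.inter_eq_left]
  intro y hy
  intro hyv
  subst hyv
  exact hxw (adj_v_eq hnv hy.symm)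

lemma deg_induce_w [Finite V] (hnv : G.neighborSet v = {w}) (hadj : G.Adj v w) (hwv : w ≠ v) :
    deg (G.induce {y : V | y ≠ v}) ⟨w, hwv⟩ = deg G w - 1 := by
  rw [deg_induce, deg]
  have : G.neighborSet w ∩ {y : V | y ≠ v} = G.neighborSet w \ {v} := by
    ext y; simp [Set.mem_diff, and_comm]
  rw [this]
  exact Set.ncard_diff_singleton_of_mem hadj.symm

lemma deg_rel [Finite V] (hnv : G.neighborSet v = {w}) (hadj : G.Adj v w) (hw4 : 3 < deg G w)
    {x : V} (hx : x ≠ v) :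
    (deg (G.induce {y : V | y ≠ v}) ⟨x, hx⟩ = 2 ↔ deg G x = 2) ∧
    (2 < deg (G.induce {y : V | y ≠ v}) ⟨x, hx⟩ ↔ 2 < deg G x) := by
  by_cases hxw : x = w
  · subst hxw
    rw [deg_induce_w hnv hadj hx]
    omega
  · rw [deg_induce_ne hnv hx hxw]
    exact ⟨Iff.rfl, Iff.rfl⟩

/-- every corridor of the induced graph maps to a corridor of `G` -/
lemma corridor_down [Finite V] (hnv : G.neighborSet v = {w}) (hadj : G.Adj v w)
    (hw4 : 3 < deg G w) {a b : ({y : V | y ≠ v} : Set V)}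
    {p' : (G.induce {y : V | y ≠ v}).Walk a b}
    (hc : IsCorridor (G.induce {y : V | y ≠ v}) p') :
    IsCorridor G (p'.map (SimpleGraph.Embedding.induce {y : V | y ≠ v}).toHom) := by
  obtain ⟨hp, hl, ha, hb, hint⟩ := hc
  refine ⟨(Walk.map_isPath_iff_of_injective
      (SimpleGraph.Embedding.induce (G := G) {y : V | y ≠ v}).injective).mpr hp,
    by rwa [Walk.length_map], ?_, ?_, ?_⟩
  · intro h
    exact ha (((deg_rel hnv hadj hw4 a.2).1.mpr h))
  · intro h
    exact hb (((deg_rel hnv hadj hw4 b.2).1.mpr h))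
  · intro x hx hxa hxb
    rw [Walk.support_map, List.mem_map] at hx
    obtain ⟨x', hx', rfl⟩ := hx
    have hxa' : x' ≠ a := fun e => hxa (congrArg Subtype.val e)
    have hxb' : x' ≠ b := fun e => hxb (congrArg Subtype.val e)
    exact (deg_rel hnv hadj hw4 x'.2).1.mp (hint x' hx' hxa' hxb')

/-- every corridor of `G` avoiding `v` lifts to the induced graph -/
lemma corridor_up [Finite V] (hnv : G.neighborSet v = {w}) (hadj : G.Adj v w)
    (hw4 : 3 < deg G w) {a b : V} {p : G.Walk a b} (hc : IsCorridor G p)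
    (hv : v ∉ p.support) :
    ∃ (a' b' : ({y : V | y ≠ v} : Set V)) (p' : (G.induce {y : V | y ≠ v}).Walk a' b'),
      IsCorridor (G.induce {y : V | y ≠ v}) p' ∧ p'.length = p.length ∧
      ↑a' = a ∧ ↑b' = b := by
  obtain ⟨hp, hl, hda, hdb, hint⟩ := hc
  have hsup : ∀ x ∈ p.support, x ∈ {y : V | y ≠ v} := fun x hx e => hv (e ▸ hx)
  have ha : a ∈ {y : V | y ≠ v} := hsup a p.start_mem_support
  have hb : b ∈ {y : V | y ≠ v} := hsup b p.end_mem_support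
  refine ⟨⟨a, ha⟩, ⟨b, hb⟩, liftW p hsup ha hb, ⟨liftW_isPath hp hsup ha hb,
    by rwa [liftW_length], ?_, ?_, ?_⟩, liftW_length p hsup ha hb, rfl, rfl⟩
  · intro h
    exact hda ((deg_rel hnv hadj hw4 ha).1.mp h)
  · intro h
    exact hdb ((deg_rel hnv hadj hw4 hb).1.mp h)
  · rintro ⟨x, hxs⟩ hx hxa hxb
    rw [liftW_support] at hx
    have hxa' : x ≠ a := fun e => hxa (Subtype.ext e)
    have hxb' : x ≠ b := fun e => hxb (Subtype.ext e)
    exact (deg_rel hnv hadj hw4 hxs).1.mpr (hint x hx hxa' hxb')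

/-- a corridor of `G` containing `v` has length 1 -/
lemma corridor_with_v [Finite V] (hnv : G.neighborSet v = {w}) (hleaf : deg G v = 1)
    (hw4 : 3 < deg G w) {a b : V} {p : G.Walk a b} (hc : IsCorridor G p)
    (hv : v ∈ p.support) : p.length = 1 := by
  -- v must be an endpoint
  have hend : v = a ∨ v = b := by
    by_contra h
    push_neg at h
    have := hc.2.2.2.2 v hv h.1 h.2
    rw [hleaf] at this
    omega
  -- reduce to the case v = a
  have key : ∀ {b' : V} (q : G.Walk v b'), IsCorridor G q → q.length = 1 := by
    intro b' q hq
    cases q with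
    | nil => exact absurd hq.2.1 (by simp)
    | @cons _ c _ h r =>
      have hcw : c = w := adj_v_eq hnv h
      cases r with
      | nil => simp
      | cons h2 r2 =>
        exfalso
        have hpath := hq.1
        rw [Walk.cons_isPath_iff] at hpath
        have hwb : c ≠ b' := by
          intro e
          subst e
          have := (Walk.isPath_iff_eq_nil).mp hpath.1
          simp at this
        have hthis := hq.2.2.2.2 c (by simp) h.ne' hwb
        rw [hcw] at hthis
        omega
  rcases hend with rfl | rfl
  · exact key p hc
  · rw [← Walk.length_reverse]
    exact key p.reverse hc.reverse

end Transfer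





end PMT

/-- removing a leaf whose unique neighbor has degree greater than 3
leaves `c(T)` unchanged. -/
theorem remove_leaf_deg4 {V : Type} [Fintype V] (G : SimpleGraph V)
    (hT : G.IsTree) (h3 : 3 ≤ Fintype.card V)
    (v w : V) (hleaf : PMT.deg G v = 1) (hadj : G.Adj v w)
    (hw : 3 < PMT.deg G w) :
    PMT.cT (G.induce {x : V | x ≠ v}) = PMT.cT G := by
  classical
  open PMT SimpleGraph in
  set s : Set V := {x : V | x ≠ v} with hs
  set G' := G.induce s with hG'
  haveI : Fintype ↥s := Fintype.ofFinite _
  have hGac : G.IsAcyclic := hT.IsAcyclic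
  have hG'ac : G'.IsAcyclic := by
    intro x c hc
    exact hGac (c.map (SimpleGraph.Embedding.induce s).toHom)
      (hc.map (SimpleGraph.Embedding.induce (G := G) s).injective)
  have hnv : G.neighborSet v = {w} := neighborSet_of_leaf hleaf hadj
  have hwv : w ≠ v := hadj.ne'
  have hws : w ∈ s := hwv
  have hdegw' : deg G' ⟨w, hws⟩ = deg G w - 1 := deg_induce_w hnv hadj hwv
  -- neither graph is a path graph
  have hnpg : ¬ IsPathGraph G := not_isPathGraph hGac (x := w) (by omega)
  have hnpg' : ¬ IsPathGraph G' := not_isPathGraph hG'ac (x := ⟨w, hws⟩) (by omega)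
  -- the corridor sets
  set S : Set ℕ := {n | ∃ (a b : V) (p : G.Walk a b), IsCorridor G p ∧ p.length = n} with hS
  set S' : Set ℕ := {n | ∃ (a b : ↥s) (p : G'.Walk a b), IsCorridor G' p ∧ p.length = n} with hS'
  set T : Set ℕ := {n | ∃ (a b : V) (p : G.Walk a b),
    IsCorridor G p ∧ 2 < deg G a ∧ 2 < deg G b ∧ p.length = n} with hT2
  set T' : Set ℕ := {n | ∃ (a b : ↥s) (p : G'.Walk a b),
    IsCorridor G' p ∧ 2 < deg G' a ∧ 2 < deg G' b ∧ p.length = n} with hT2'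
  have hS'S : S' ⊆ S := by
    rintro n ⟨a, b, p', hc, rfl⟩
    exact ⟨↑a, ↑b, p'.map (SimpleGraph.Embedding.induce s).toHom,
      corridor_down hnv hadj hw hc, Walk.length_map _ p'⟩
  have hSS' : S ⊆ S' ∪ {1} := by
    rintro n ⟨a, b, p, hc, rfl⟩
    by_cases hv : v ∈ p.support
    · right
      exact corridor_with_v hnv hleaf hw hc hv
    · left
      obtain ⟨a', b', p', hc', hlen, _, _⟩ := corridor_up hnv hadj hw hc hv
      exact ⟨a', b', p', hc', hlen⟩
  have h1S : (1 : ℕ) ∈ S := by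
    refine ⟨v, w, Walk.cons hadj Walk.nil, ⟨?_, by simp, ?_, by omega, ?_⟩, by simp⟩
    · simp [Walk.cons_isPath_iff, hadj.ne]
    · rw [hleaf]; omega
    · intro x hx hxv hxw
      simp only [Walk.support_cons, Walk.support_nil, List.mem_cons,
        List.mem_singleton] at hx
      rcases hx with rfl | rfl | hx
      · exact absurd rfl hxv
      · exact absurd rfl hxw
      · simp at hx
  have hbddS : BddAbove S := by
    refine ⟨Fintype.card V, ?_⟩
    rintro n ⟨a, b, p, hc, rfl⟩
    exact le_of_lt hc.1.length_lt
  have hbddS' : BddAbove S' := hbddS.mono hS'S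
  -- S' is nonempty
  have hneS' : S'.Nonempty := by
    have hpos : 0 < deg G' ⟨w, hws⟩ := by omega
    have : (G'.neighborSet ⟨w, hws⟩).Nonempty := by
      rw [← Set.ncard_pos (Set.toFinite _)] at *
      exact hpos
    obtain ⟨u, hu⟩ := this
    obtain ⟨a, b, p, hp⟩ := exists_corridor hG'ac hu (by omega)
    exact ⟨p.length, a, b, p, hp, rfl⟩
  have hge1 : ∀ n ∈ S', 1 ≤ n := by
    rintro n ⟨a, b, p, hc, rfl⟩
    exact hc.2.1
  -- c1 equality
  have hc1 : c1 G' = c1 G := by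
    rw [c1, c1, ← hS, ← hS']
    apply le_antisymm
    · exact csSup_le_csSup hbddS hneS' hS'S
    · refine csSup_le ⟨1, h1S⟩ ?_
      intro n hn
      rcases hSS' hn with hn' | hn'
      · exact le_csSup hbddS' hn'
      · rw [Set.mem_singleton_iff] at hn'
        subst hn'
        obtain ⟨m, hm⟩ := hneS'
        exact le_trans (hge1 m hm) (le_csSup hbddS' hm)
  -- c2 equality
  have hTeq : T' = T := by
    ext n
    constructor
    · rintro ⟨a, b, p', hc, ha, hb, rfl⟩
      refine ⟨↑a, ↑b, p'.map (SimpleGraph.Embedding.induce s).toHom,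
        corridor_down hnv hadj hw hc, ?_, ?_, Walk.length_map _ p'⟩
      · exact (deg_rel hnv hadj hw a.2).2.mp ha
      · exact (deg_rel hnv hadj hw b.2).2.mp hb
    · rintro ⟨a, b, p, hc, ha, hb, rfl⟩
      have hv : v ∉ p.support := by
        intro hv
        have hend : v = a ∨ v = b := by
          by_contra hcon
          push_neg at hcon
          have := hc.2.2.2.2 v hv hcon.1 hcon.2
          rw [hleaf] at this
          omega
        rcases hend with rfl | rfl
        · rw [hleaf] at ha; omega
        · rw [hleaf] at hb; omega
      obtain ⟨a', b', p', hc', hlen, haa, hbb⟩ := corridor_up hnv hadj hw hc hv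
      refine ⟨a', b', p', hc', ?_, ?_, hlen⟩
      · have := (deg_rel hnv hadj hw a'.2).2.mpr (haa ▸ ha)
        rwa [Subtype.coe_eta] at this
      · have := (deg_rel hnv hadj hw b'.2).2.mpr (hbb ▸ hb)
        rwa [Subtype.coe_eta] at this
  have hc2 : c2 G' = c2 G := by
    rw [c2, c2, ← hT2, ← hT2', hTeq]
  rw [cT, cT, if_neg hnpg, if_neg hnpg', hc1, hc2]
end
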